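/- Chain LP bound, case of cheapest positive edge excluded: For a chain of length k ≥ 3 with positive weights a_1, …, a_{k−1} on consecutive edges and weight −b (b > 0) on the edge (1, k), if min(a_1, …, a_{k−1}) ≤ b, then every LP-feasible point x on k vertices satisfies ∑_{i=1}^{k−1} a_i · x(i, i+1) − b · x(1, k) ≤ ∑_{i=1}^{k−1} a_i − min(a_1, …, a_{k−1}). -/

import Mathlib

/-!
Write `m` for the smallest chain weight. As every `x (i, i+1) ≤ 1` and every `a i ≥ m`, the
weighted sum `∑ a i * x (i, i+1)` falls short of `∑ a i` by at least `m * ∑ (1 - x (i, i+1))`.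
Chaining the triangle inequalities along the path `1, 2, …, k` gives
`∑ (1 - x (i, i+1)) ≥ 1 - x (1, k)`, so the objective is at most
`∑ a i - m + (m - b) * x (1, k) ≤ ∑ a i - m`.
-/

open Finset

/-- An LP-feasible point: symmetric, entries in `[0,1]`, satisfying the triangle
inequalities of the LP relaxation of the clique partitioning ILP. -/
def LPFeasible {n : ℕ} (x : Fin n → Fin n → ℝ) : Prop :=
  (∀ i j, x i j = x j i) ∧
  (∀ i j : Fin n, i < j → 0 ≤ x i j ∧ x i j ≤ 1) ∧
  (∀ i j k : Fin n, i < j → j < k →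
    x i j + x j k - x i k ≤ 1 ∧ x i j - x j k + x i k ≤ 1 ∧ -x i j + x j k + x i k ≤ 1)

/-- LP objective value `∑_{i<j} w i j * x i j`. -/
noncomputable def lpObj {n : ℕ} (w x : Fin n → Fin n → ℝ) : ℝ :=
  ∑ i : Fin n, ∑ j : Fin n, if i < j then w i j * x i j else 0

theorem LPFeasible.comp {m n : ℕ} {x : Fin n → Fin n → ℝ} (hx : LPFeasible x)
    {f : Fin m → Fin n} (hf : StrictMono f) : LPFeasible fun i j => x (f i) (f j) :=
  ⟨fun i j => hx.1 (f i) (f j), fun _ _ hij => hx.2.1 _ _ (hf hij),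
    fun _ _ _ hij hjk => hx.2.2 _ _ _ (hf hij) (hf hjk)⟩

theorem LPFeasible.one_sub_le_sum_one_sub {n : ℕ} {x : Fin (n + 2) → Fin (n + 2) → ℝ}
    (hx : LPFeasible x) :
    1 - x 0 (Fin.last (n + 1)) ≤ ∑ i : Fin (n + 1), (1 - x i.castSucc i.succ) := by
  induction n with
  | zero => simp
  | succ n ih =>
    have hprefix := ih (hx.comp Fin.strictMono_castSucc)
    have hlast := (hx.2.2 0 (Fin.last (n + 1)).castSucc (Fin.last (n + 2))
      (Fin.castSucc_pos Fin.last_pos) (Fin.castSucc_lt_last _)).1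
    simp only [Fin.castSucc_zero, ← Fin.succ_castSucc] at hprefix
    rw [Fin.sum_univ_castSucc, Fin.succ_last]
    linarith

theorem sum_mul_le_sum_sub_mul_sum_one_sub {ι : Type*} (s : Finset ι) {a y : ι → ℝ} {m : ℝ}
    (ha : ∀ i ∈ s, m ≤ a i) (hy : ∀ i ∈ s, y i ≤ 1) :
    ∑ i ∈ s, a i * y i ≤ ∑ i ∈ s, a i - m * ∑ i ∈ s, (1 - y i) := by
  rw [mul_sum, ← sum_sub_distrib]
  refine sum_le_sum fun i hi => ?_
  nlinarith [mul_nonneg (sub_nonneg.2 (ha i hi)) (sub_nonneg.2 (hy i hi))]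

/-- **Chain LP bound, cheapest-positive-edge case.** For a chain of length `k ≥ 3`
with positive weights `a 0, …, a (k-2)` on consecutive edges and weight `-b`
(`b > 0`) on the edge `(0, k-1)`, if `min (a 0, …, a (k-2)) ≤ b`, then every
LP-feasible point `x` satisfies
`∑ i, a i * x(i, i+1) - b * x(0, k-1) ≤ ∑ i, a i - min (a 0, …, a (k-2))`. -/
theorem chain_LP_bound_positive_edge (k : ℕ) (hk : 3 ≤ k) (a : ℕ → ℝ) (b : ℝ)
    (ha : ∀ i, i < k - 1 → 0 < a i)
    (hmin : (Finset.range (k - 1)).inf' (Finset.nonempty_range_iff.mpr (by omega)) a ≤ b)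
    (x : Fin k → Fin k → ℝ) (hx : LPFeasible x) :
    (∑ i : Fin (k - 1), a i.val *
        x ⟨i.val, by have := i.isLt; omega⟩ ⟨i.val + 1, by have := i.isLt; omega⟩)
      - b * x ⟨0, by omega⟩ ⟨k - 1, by omega⟩
    ≤ (∑ i ∈ Finset.range (k - 1), a i)
      - (Finset.range (k - 1)).inf' (Finset.nonempty_range_iff.mpr (by omega)) a := by
  obtain ⟨n, rfl⟩ : ∃ n, k = n + 2 := ⟨k - 2, by omega⟩
  set m := (range (n + 2 - 1)).inf' (nonempty_range_iff.mpr (by omega)) a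
  set X := x 0 (Fin.last (n + 1))
  have hm_pos : 0 < m := (lt_inf'_iff _).2 fun i hi => ha i (mem_range.1 hi)
  have hX : 0 ≤ X := (hx.2.1 _ _ Fin.last_pos).1
  have hweighted := sum_mul_le_sum_sub_mul_sum_one_sub univ (m := m)
    (fun (i : Fin (n + 1)) _ => inf'_le a (mem_range.2 i.isLt))
    (fun i _ => (hx.2.1 i.castSucc i.succ Fin.castSucc_lt_succ).2)
  calc ∑ i : Fin (n + 1), a i * x i.castSucc i.succ - b * X
      ≤ ∑ i : Fin (n + 1), a i - m * (1 - X) - b * X := by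
        gcongr
        exact hweighted.trans (by gcongr; exact hx.one_sub_le_sum_one_sub)
    _ ≤ ∑ i ∈ range (n + 1), a i - m := by
        rw [Fin.sum_univ_eq_sum_range (fun i => a i)]
        linarith [mul_le_mul_of_nonneg_right hmin hX]
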